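/- arXiv:1305.6735 — 5 statements merged into one kernel-verified Lean document; each statement's English description precedes it below -/
import Mathlib

section
/- For every n ∈ ℕ and every x ∈ ℝ there exist a probability space (Ω, 𝒜, μ), a filtration (ℱ_k) on it, and a real-valued martingale (M_k) with respect to (ℱ_k) and μ with M_0 = 0 almost surely and |M_{k+1} − M_k| ≤ 1 almost surely for all k, such that μ{ω : ∃ k with 0 ≤ k ≤ n and M_k(ω) ≥ x} = D_n(x). In particular the supremum of μ{∃ k ≤ n, M_k ≥ x} over all such martingales equals D_n(x). -/
open Classical in
/-- The recursively defined functions `D n : ℝ → ℝ`. -/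
noncomputable def D : ℕ → ℝ → ℝ
  | 0, x => if x ≤ 0 then 1 else 0
  | n + 1, x =>
    if x ≤ 0 then 1
    else if ((n : ℝ) + 1) < x then 0
    else if ∃ m : ℤ, x = (m : ℝ) then
      (1 / 2) * D n (x - 1) + (1 / 2) * D n (x + 1)
    else if Odd n ∧ x < 1 then
      (1 - x) * D n 0 + x * D n 1
    else if Even (⌊x⌋ + (n : ℤ)) then
      (1 / (1 + Int.fract x)) * D n (⌊x⌋ : ℝ)
        + (Int.fract x / (1 + Int.fract x)) * D n (x + 1)
    else
      ((1 - Int.fract x) / (2 - Int.fract x)) * D n (x - 1)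
        + (1 / (2 - Int.fract x)) * D n (⌈x⌉ : ℝ)

open MeasureTheory

/-!
Every case of the recursion writes `D (m + 1) d = p * D m a + (1 - p) * D m b` with
`p * a + (1 - p) * b = d`, `|a - d| ≤ 1`, `|b - d| ≤ 1`, and `a = b = d` once `d ≤ 0`.
Run the Markov chain that, with `m` steps to go, moves from `d` to `a` with probability `p` and
to `b` otherwise, starting from `x`, on the space of `n` coin flips. It is a martingale with
unit increments, it stays put once it reaches `(-∞, 0]`, and backward induction on the
recursion shows that it ends in `(-∞, 0]` with probability `D n x`. The required martingale is
`x` minus this chain.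
-/

namespace MeasureTheory

variable {α : Type*} [MeasurableSpace α]

def Filtration.piFinLT (n : ℕ) :
    Filtration ℕ (MeasurableSpace.pi : MeasurableSpace (Fin n → α)) where
  seq k := Filtration.piFinset {i : Fin n | (i : ℕ) < k}
  mono' _ _ hkl := Filtration.piFinset.mono fun _ => by simpa using (lt_of_lt_of_le · hkl)
  le' _ := Filtration.piFinset.le _

lemma dependsOn_indicator_of_measurableSet_piFinLT {n k : ℕ} {s : Set (Fin n → α)}
    (hs : MeasurableSet[Filtration.piFinLT n k] s) :
    DependsOn (s.indicator fun _ => (1 : ℝ)) {i | (i : ℕ) < k} := by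
  simpa using (measurable_const.indicator hs).dependsOn_of_piFinset

lemma stronglyMeasurable_piFinLT_of_dependsOn [MeasurableSingletonClass α] [Finite α] {n k : ℕ}
    {f : (Fin n → α) → ℝ} (hf : DependsOn f {i | (i : ℕ) < k}) :
    StronglyMeasurable[Filtration.piFinLT n k] f := by
  have hf' : DependsOn f (({i : Fin n | (i : ℕ) < k} : Finset (Fin n)) : Set (Fin n)) := by
    simpa using hf
  obtain ⟨g, rfl⟩ := dependsOn_iff_exists_comp.mp hf'
  refine (Measurable.of_discrete.comp ?_).stronglyMeasurable
  exact comap_measurable (m := MeasurableSpace.pi) _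

theorem martingale_of_sum_mul_increment_eq_zero [MeasurableSingletonClass α] [Fintype α] {n : ℕ}
    (p : PMF (Fin n → α)) {X : ℕ → (Fin n → α) → ℝ} (hX : ∀ k, DependsOn (X k) {i | (i : ℕ) < k})
    (hinc : ∀ k (g : (Fin n → α) → ℝ), DependsOn g {i | (i : ℕ) < k} →
      ∑ ω, (p ω).toReal * g ω * (X (k + 1) ω - X k ω) = 0) :
    Martingale X (Filtration.piFinLT n) p.toMeasure := by
  refine martingale_of_setIntegral_eq_succ
    (fun k => stronglyMeasurable_piFinLT_of_dependsOn (hX k)) (fun _ => .of_finite)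
    fun k s hs => ?_
  have hs' := (Filtration.piFinLT n).le k s hs
  rw [← integral_indicator hs', ← integral_indicator hs', PMF.integral_eq_sum,
    PMF.integral_eq_sum, eq_comm, ← sub_eq_zero, ← Finset.sum_sub_distrib,
    ← hinc k _ (dependsOn_indicator_of_measurableSet_piFinLT hs)]
  refine Finset.sum_congr rfl fun ω _ => ?_
  by_cases hω : ω ∈ s <;> simp [hω, mul_sub]

end MeasureTheory

lemma Fin.sum_pi_eq_sum_sum_cons {α M : Type*} [Fintype α] [AddCommMonoid M] {n : ℕ}
    (f : (Fin (n + 1) → α) → M) : ∑ ω, f ω = ∑ c, ∑ ω, f (Fin.cons c ω) := by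
  rw [← (Fin.consEquiv fun _ => α).sum_comp, Fintype.sum_prod_type]
  rfl

namespace FinChain

variable {α : Type*} (P T : ℕ → ℝ → α → ℝ)

/-- The chain started at `x` and driven by the coins `ω`, after `k` steps: the transition used
with `m` steps to go is `T m`, so `path T n x ω` runs through `T (n - 1), …, T 0` and then stops. -/
def path : (n : ℕ) → ℝ → (Fin n → α) → ℕ → ℝ
  | 0, x, _, _ => x
  | _ + 1, x, _, 0 => x
  | n + 1, x, ω, k + 1 => path n (T n x (ω 0)) (Fin.tail ω) k

def weight : (n : ℕ) → ℝ → (Fin n → α) → ℝ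
  | 0, _, _ => 1
  | n + 1, x, ω => P n x (ω 0) * weight n (T n x (ω 0)) (Fin.tail ω)

variable {P T}

@[simp]
lemma path_zero (n : ℕ) (x : ℝ) (ω : Fin n → α) : path T n x ω 0 = x := by
  cases n <;> rfl

@[simp]
lemma path_cons_succ (n : ℕ) (x : ℝ) (c : α) (ω : Fin n → α) (k : ℕ) :
    path T (n + 1) x (Fin.cons c ω) (k + 1) = path T n (T n x c) ω k := by
  simp [path]

@[simp]
lemma weight_cons (n : ℕ) (x : ℝ) (c : α) (ω : Fin n → α) :
    weight P T (n + 1) x (Fin.cons c ω) = P n x c * weight P T n (T n x c) ω := by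
  simp [weight]

lemma weight_nonneg (hP : ∀ m d c, 0 ≤ P m d c) (n : ℕ) (x : ℝ) (ω : Fin n → α) :
    0 ≤ weight P T n x ω := by
  induction n generalizing x with
  | zero => exact zero_le_one
  | succ n ih => exact mul_nonneg (hP _ _ _) (ih _ _)

lemma dependsOn_cons {β : Type*} {n k : ℕ} {g : (Fin (n + 1) → α) → β}
    (hg : DependsOn g {i | (i : ℕ) < k + 1}) (c : α) :
    DependsOn (fun ω => g (Fin.cons c ω)) {i | (i : ℕ) < k} := by
  intro ω ω' h
  refine hg fun i hi => ?_
  cases i using Fin.cases with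
  | zero => rfl
  | succ i => simpa using h i (by simpa using hi)

theorem dependsOn_path (n : ℕ) (x : ℝ) (k : ℕ) :
    DependsOn (fun ω => path T n x ω k) {i : Fin n | (i : ℕ) < k} := by
  induction n generalizing x k with
  | zero => exact fun _ _ _ => rfl
  | succ n ih =>
    intro ω ω' h
    cases k with
    | zero => simp
    | succ k =>
      dsimp only
      rw [← Fin.cons_self_tail ω, ← Fin.cons_self_tail ω', path_cons_succ, path_cons_succ,
        h 0 (by simp)]
      exact ih _ _ fun i hi => h i.succ (by simpa using hi)

lemma abs_path_succ_sub_le (hT : ∀ m d c, |T m d c - d| ≤ 1) (n : ℕ) (x : ℝ) (ω : Fin n → α)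
    (k : ℕ) : |path T n x ω (k + 1) - path T n x ω k| ≤ 1 := by
  induction n generalizing x k with
  | zero => simp [path]
  | succ n ih =>
    rw [← Fin.cons_self_tail ω]
    cases k with
    | zero => simpa only [path_cons_succ, path_zero] using hT n x (ω 0)
    | succ k => simpa only [path_cons_succ] using ih _ _ k

lemma path_succ_eq_of_isFixedPt {y : ℝ} (hy : ∀ m c, T m y c = y) (n : ℕ) (x : ℝ)
    (ω : Fin n → α) {k : ℕ} (hk : path T n x ω k = y) : path T n x ω (k + 1) = y := by
  induction n generalizing x k with
  | zero => exact hk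
  | succ n ih =>
    rw [← Fin.cons_self_tail ω] at hk ⊢
    cases k with
    | zero =>
      rw [path_zero] at hk
      rw [path_cons_succ, path_zero, hk, hy]
    | succ k => rw [path_cons_succ] at hk ⊢; exact ih _ _ hk

lemma path_eq_of_isFixedPt {y : ℝ} (hy : ∀ m c, T m y c = y) (n : ℕ) (x : ℝ)
    (ω : Fin n → α) {k j : ℕ} (hkj : k ≤ j) (hk : path T n x ω k = y) : path T n x ω j = y := by
  induction j, hkj using Nat.le_induction with
  | base => exact hk
  | succ j _ ih => exact path_succ_eq_of_isFixedPt hy n x ω ih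

lemma exists_path_nonpos_iff (hT : ∀ m {d}, d ≤ 0 → ∀ c, T m d c = d) (n : ℕ) (x : ℝ)
    (ω : Fin n → α) : (∃ k ≤ n, path T n x ω k ≤ 0) ↔ path T n x ω n ≤ 0 := by
  refine ⟨fun ⟨k, hkn, hk⟩ => ?_, fun h => ⟨n, le_rfl, h⟩⟩
  rwa [path_eq_of_isFixedPt (fun m => hT m hk) n x ω hkn rfl]

variable [Fintype α]

theorem sum_weight_mul_path
    (f : ℕ → ℝ → ℝ) (hf : ∀ m d, f (m + 1) d = ∑ c, P m d c * f m (T m d c))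
    (n : ℕ) (x : ℝ) : ∑ ω, weight P T n x ω * f 0 (path T n x ω n) = f n x := by
  induction n generalizing x with
  | zero => simp [weight, path]
  | succ n ih =>
    simp only [Fin.sum_pi_eq_sum_sum_cons, weight_cons, path_cons_succ, mul_assoc,
      ← Finset.mul_sum, ih, hf]

theorem sum_weight (hP : ∀ m d, ∑ c, P m d c = 1) (n : ℕ) (x : ℝ) :
    ∑ ω, weight P T n x ω = 1 := by
  simpa using sum_weight_mul_path (fun _ _ => 1) (fun m d => by simp [hP]) n x

section Martingale

variable (hP : ∀ m d, ∑ c, P m d c = 1) (hT : ∀ m d, ∑ c, P m d c * T m d c = d)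
include hP hT

lemma sum_weight_mul_path_one_sub (n : ℕ) (x : ℝ) :
    ∑ ω, weight P T n x ω * (path T n x ω 1 - x) = 0 := by
  cases n with
  | zero => simp [path]
  | succ n =>
    calc ∑ ω, weight P T (n + 1) x ω * (path T (n + 1) x ω 1 - x)
        = ∑ c, P n x c * (T n x c - x) * ∑ ω, weight P T n (T n x c) ω := by
          simp only [Fin.sum_pi_eq_sum_sum_cons, weight_cons, path_cons_succ, path_zero,
            Finset.mul_sum]
          exact Finset.sum_congr rfl fun c _ => Finset.sum_congr rfl fun ω _ => by ring
      _ = ∑ c, P n x c * T n x c - (∑ c, P n x c) * x := by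
          simp only [sum_weight hP, mul_one, mul_sub, Finset.sum_sub_distrib, Finset.sum_mul]
      _ = 0 := by rw [hT, hP, one_mul, sub_self]

theorem sum_weight_mul_path_increment (n : ℕ) (x : ℝ) (k : ℕ)
    (g : (Fin n → α) → ℝ) (hg : DependsOn g {i | (i : ℕ) < k}) :
    ∑ ω, weight P T n x ω * g ω * (path T n x ω (k + 1) - path T n x ω k) = 0 := by
  induction n generalizing x k with
  | zero => simp [path]
  | succ n ih =>
    cases k with
    | zero =>
      rcases isEmpty_or_nonempty α with hα | ⟨⟨c₀⟩⟩
      · simp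
      have hG : ∀ ω, g ω = g fun _ => c₀ := fun ω => hg (by simp)
      calc ∑ ω, weight P T (n + 1) x ω * g ω * (path T (n + 1) x ω 1 - path T (n + 1) x ω 0)
          = g (fun _ => c₀) * ∑ ω, weight P T (n + 1) x ω * (path T (n + 1) x ω 1 - x) := by
            rw [Finset.mul_sum]
            exact Finset.sum_congr rfl fun ω _ => by rw [hG ω, path_zero]; ring
        _ = 0 := by rw [sum_weight_mul_path_one_sub hP hT, mul_zero]
    | succ k =>
      rw [Fin.sum_pi_eq_sum_sum_cons]
      refine Finset.sum_eq_zero fun c _ => ?_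
      calc ∑ ω, weight P T (n + 1) x (Fin.cons c ω) * g (Fin.cons c ω) *
            (path T (n + 1) x (Fin.cons c ω) (k + 2) - path T (n + 1) x (Fin.cons c ω) (k + 1))
          = P n x c * ∑ ω, weight P T n (T n x c) ω * g (Fin.cons c ω) *
              (path T n (T n x c) ω (k + 1) - path T n (T n x c) ω k) := by
            simp only [weight_cons, path_cons_succ, Finset.mul_sum, mul_assoc]
        _ = 0 := by rw [ih _ _ _ (dependsOn_cons hg c), mul_zero]

end Martingale

noncomputable def pathPMF (hP₀ : ∀ m d c, 0 ≤ P m d c) (hP : ∀ m d, ∑ c, P m d c = 1)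
    (n : ℕ) (x : ℝ) : PMF (Fin n → α) :=
  PMF.ofFintype (fun ω => ENNReal.ofReal (weight P T n x ω)) <| by
    rw [← ENNReal.ofReal_sum_of_nonneg fun ω _ => weight_nonneg hP₀ n x ω, sum_weight hP,
      ENNReal.ofReal_one]

variable (hP₀ : ∀ m d c, 0 ≤ P m d c) (hP : ∀ m d, ∑ c, P m d c = 1)

lemma toReal_pathPMF (n : ℕ) (x : ℝ) (ω : Fin n → α) :
    (pathPMF (T := T) hP₀ hP n x ω).toReal = weight P T n x ω :=
  ENNReal.toReal_ofReal (weight_nonneg hP₀ n x ω)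

variable [MeasurableSpace α] [MeasurableSingletonClass α]

lemma measureReal_pathPMF (n : ℕ) (x : ℝ) (s : Set (Fin n → α)) :
    (pathPMF (T := T) hP₀ hP n x).toMeasure.real s =
      ∑ ω, weight P T n x ω * s.indicator 1 ω := by
  rw [← integral_indicator_one (MeasurableSet.of_discrete), PMF.integral_eq_sum]
  simp [toReal_pathPMF]

theorem martingale_path (hT : ∀ m d, ∑ c, P m d c * T m d c = d) (n : ℕ) (x : ℝ) :
    Martingale (fun k ω => path T n x ω k) (Filtration.piFinLT n)
      (pathPMF (T := T) hP₀ hP n x).toMeasure :=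
  martingale_of_sum_mul_increment_eq_zero _ (dependsOn_path n x) fun k g hg => by
    simpa only [toReal_pathPMF] using sum_weight_mul_path_increment hP hT n x k g hg

end FinChain

namespace DRecursion

open Classical in
/-- `(p, a, b)`: the step from `d` with `m` steps to go moves to `a` with probability `p`, else
to `b`; read off from the recursion of `D (m + 1)`. -/
noncomputable def rule (m : ℕ) (d : ℝ) : ℝ × ℝ × ℝ :=
  if d ≤ 0 then (1, d, d)
  else if (m : ℝ) + 1 < d then (1, d, d)
  else if ∃ z : ℤ, d = z then (1 / 2, d - 1, d + 1)
  else if Odd m ∧ d < 1 then (1 - d, 0, 1)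
  else if Even (⌊d⌋ + (m : ℤ)) then (1 / (1 + Int.fract d), ⌊d⌋, d + 1)
  else ((1 - Int.fract d) / (2 - Int.fract d), d - 1, ⌈d⌉)

lemma ceil_eq_add_one_sub_fract {d : ℝ} (h : ¬ ∃ z : ℤ, d = z) :
    (⌈d⌉ : ℝ) = d + 1 - Int.fract d := by
  have := Int.ceil_sub_self_eq <| Int.fract_ne_zero_iff.mpr fun ⟨z, hz⟩ => h ⟨z, hz.symm⟩
  linarith

lemma rule_prob_mem (m : ℕ) (d : ℝ) : 0 ≤ (rule m d).1 ∧ (rule m d).1 ≤ 1 := by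
  have := Int.fract_nonneg d
  have := Int.fract_lt_one d
  unfold rule
  split_ifs with h₁ h₂ h₃ h₄ h₅
  · norm_num
  · norm_num
  · norm_num
  · constructor <;> linarith [h₄.2]
  · exact ⟨by positivity, by rw [div_le_one (by positivity)]; linarith⟩
  · exact ⟨div_nonneg (by linarith) (by linarith), by rw [div_le_one (by linarith)]; linarith⟩

lemma rule_mean (m : ℕ) (d : ℝ) :
    (rule m d).1 * (rule m d).2.1 + (1 - (rule m d).1) * (rule m d).2.2 = d := by
  have := Int.fract_nonneg d
  have := Int.fract_lt_one d
  have := Int.floor_add_fract d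
  have : 2 - Int.fract d ≠ 0 := by linarith
  unfold rule
  split_ifs with h₁ h₂ h₃ h₄ h₅
  · ring
  · ring
  · ring
  · ring
  · field_simp
    linarith
  · rw [ceil_eq_add_one_sub_fract h₃]
    field_simp
    ring

lemma rule_jump (m : ℕ) (d : ℝ) : |(rule m d).2.1 - d| ≤ 1 ∧ |(rule m d).2.2 - d| ≤ 1 := by
  have := Int.fract_nonneg d
  have := Int.fract_lt_one d
  have := Int.floor_add_fract d
  unfold rule
  split_ifs with h₁ h₂ h₃ h₄ h₅
  · simp
  · simp
  · norm_num
  · simp only [abs_le]; constructor <;> constructor <;> linarith [h₄.2]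
  · simp only [abs_le]; constructor <;> constructor <;> linarith
  · rw [ceil_eq_add_one_sub_fract h₃]
    simp only [abs_le]; constructor <;> constructor <;> linarith

lemma rule_of_nonpos (m : ℕ) {d : ℝ} (h : d ≤ 0) : rule m d = (1, d, d) := if_pos h

lemma D_of_nonpos (m : ℕ) {d : ℝ} (h : d ≤ 0) : D m d = 1 := by
  cases m <;> simp [D, h]

lemma D_of_lt (m : ℕ) {d : ℝ} (h : (m : ℝ) < d) : D m d = 0 := by
  cases m with
  | zero => simp [D, not_le.mpr (by exact_mod_cast h : (0 : ℝ) < d)]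
  | succ m =>
    push_cast at h
    simp [D, h, show ¬d ≤ 0 by linarith]

theorem D_succ (m : ℕ) (d : ℝ) :
    D (m + 1) d = (rule m d).1 * D m (rule m d).2.1 + (1 - (rule m d).1) * D m (rule m d).2.2 := by
  have := Int.fract_nonneg d
  have := Int.fract_lt_one d
  have : 2 - Int.fract d ≠ 0 := by linarith
  rw [D]
  unfold rule
  split_ifs with h₁ h₂ h₃ h₄ h₅
  · rw [D_of_nonpos m h₁]; ring
  · rw [D_of_lt m (by linarith)]; ring
  · ring
  · ring
  · field_simp; ring
  · field_simp; ring

noncomputable def prob (m : ℕ) (d : ℝ) : Bool → ℝ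
  | true => (rule m d).1
  | false => 1 - (rule m d).1

noncomputable def next (m : ℕ) (d : ℝ) : Bool → ℝ
  | true => (rule m d).2.1
  | false => (rule m d).2.2

lemma prob_nonneg (m : ℕ) (d : ℝ) : ∀ c, 0 ≤ prob m d c
  | true => (rule_prob_mem m d).1
  | false => sub_nonneg.mpr (rule_prob_mem m d).2

lemma sum_prob (m : ℕ) (d : ℝ) : ∑ c, prob m d c = 1 := by
  simp [prob]

lemma sum_prob_mul_next (m : ℕ) (d : ℝ) : ∑ c, prob m d c * next m d c = d := by
  simpa [prob, next, add_comm] using rule_mean m d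

lemma abs_next_sub_le (m : ℕ) (d : ℝ) : ∀ c, |next m d c - d| ≤ 1
  | true => (rule_jump m d).1
  | false => (rule_jump m d).2

lemma next_of_nonpos (m : ℕ) {d : ℝ} (h : d ≤ 0) (c : Bool) : next m d c = d := by
  cases c <;> simp [next, rule_of_nonpos m h]

lemma D_succ_eq_sum (m : ℕ) (d : ℝ) : D (m + 1) d = ∑ c, prob m d c * D m (next m d c) := by
  simp [D_succ, prob, next]

end DRecursion

open FinChain DRecursion

/-- the bound `D_n(x)` is attained: there is a probability space, a
filtration and a bounded-difference martingale starting at `0` whose probability of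
visiting `[x, ∞)` within `n` steps equals `D_n(x)`. -/
theorem exists_martingale_visit_prob_eq (n : ℕ) (x : ℝ) :
    ∃ (Ω : Type) (mΩ : MeasurableSpace Ω) (μ : Measure Ω) (_ : IsProbabilityMeasure μ)
      (ℱ : Filtration ℕ mΩ) (M : ℕ → Ω → ℝ),
      Martingale M ℱ μ ∧
      (∀ᵐ ω ∂μ, M 0 ω = 0) ∧
      (∀ k : ℕ, ∀ᵐ ω ∂μ, |M (k + 1) ω - M k ω| ≤ 1) ∧
      (μ {ω | ∃ k ≤ n, x ≤ M k ω}).toReal = D n x := by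
  let μ := (pathPMF (T := next) prob_nonneg sum_prob n x).toMeasure
  have hvisit : {ω | ∃ k ≤ n, x ≤ x - path next n x ω k} = {ω | path next n x ω n ≤ 0} := by
    ext ω
    simpa only [Set.mem_ofPred_eq, le_sub_self_iff] using
      exists_path_nonpos_iff next_of_nonpos n x ω
  refine ⟨Fin n → Bool, _, μ, inferInstance, Filtration.piFinLT n,
    fun k ω => x - path next n x ω k,
    (martingale_const _ _ x).sub (martingale_path prob_nonneg sum_prob sum_prob_mul_next n x),
    ae_of_all _ fun ω => by simp, fun k => ae_of_all _ fun ω => ?_, ?_⟩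
  · simpa [abs_sub_comm] using abs_path_succ_sub_le abs_next_sub_le n x ω k
  · rw [← measureReal_def, hvisit, measureReal_pathPMF,
      ← sum_weight_mul_path D D_succ_eq_sum n x]
    refine Finset.sum_congr rfl fun ω _ => ?_
    by_cases h : path next n x ω n ≤ 0 <;> simp [D, h]
end

section
/- Let n ∈ ℕ, m ∈ ℤ with 0 ≤ m ≤ n − 1, and 0 ≤ α < 1, and suppose m + n is odd. Then with x = m + α and h = (n − m − 1)/2, D_n(x) = Σ_{i=0}^{h} (α^i/(1+α)^{i+1}) · B(n−i−1, m+i). -/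
/-- `B n k = 2⁻ⁿ ∑_{i=0}^{n-k} C(n, ⌊i/2⌋)`, the normalized sum of the `n - k + 1`
smallest binomial coefficients. -/
noncomputable def B (n : ℕ) (k : ℤ) : ℝ :=
  (2 : ℝ) ^ (-(n : ℤ)) * ∑ i ∈ Finset.range (((n : ℤ) - k).toNat + 1), (n.choose (i / 2) : ℝ)

lemma choose_half_shift (n : ℕ) : ∀ T : ℕ,
    ∑ i ∈ Finset.range (T+2), (n+1).choose (i/2)
      = ∑ i ∈ Finset.range (T+2), n.choose (i/2) + ∑ i ∈ Finset.range T, n.choose (i/2) := by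
  intro T
  induction T with
  | zero => simp [Finset.sum_range_succ]
  | succ T ih =>
    have e1 : ∑ i ∈ Finset.range (T+1+2), (n+1).choose (i/2)
        = ∑ i ∈ Finset.range (T+2), (n+1).choose (i/2) + (n+1).choose ((T+2)/2) := by
      rw [show T+1+2 = (T+2)+1 by omega, Finset.sum_range_succ]
    have e2 : ∑ i ∈ Finset.range (T+1+2), n.choose (i/2)
        = ∑ i ∈ Finset.range (T+2), n.choose (i/2) + n.choose ((T+2)/2) := by
      rw [show T+1+2 = (T+2)+1 by omega, Finset.sum_range_succ]
    have e3 : ∑ i ∈ Finset.range (T+1), n.choose (i/2)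
        = ∑ i ∈ Finset.range T, n.choose (i/2) + n.choose (T/2) := Finset.sum_range_succ _ _
    have hp : (n+1).choose ((T+2)/2) = n.choose (T/2) + n.choose ((T+2)/2) := by
      rw [show (T+2)/2 = T/2 + 1 by omega, Nat.choose_succ_succ]
    rw [e1, e2, e3, ih]
    omega

lemma choose_half_total : ∀ n : ℕ, ∑ i ∈ Finset.range (n+1), n.choose (i/2) = 2^n := by
  intro n
  induction n with
  | zero => simp
  | succ n ih =>
    have key : n.choose ((n+1)/2) = n.choose (n/2) := by
      rcases Nat.even_or_odd n with he | ho
      · obtain ⟨t, rfl⟩ := he; congr 1; omega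
      · obtain ⟨t, rfl⟩ := ho
        have h1 : (2*t+1)/2 = (2*t+1) - ((2*t+1)+1)/2 := by omega
        rw [h1, Nat.choose_symm (by omega)]
    have e0 : ∑ i ∈ Finset.range (n+1+1), (n+1).choose (i/2)
        = ∑ i ∈ Finset.range (n+1), n.choose (i/2) + n.choose ((n+1)/2)
          + ∑ i ∈ Finset.range n, n.choose (i/2) := by
      have := choose_half_shift n n
      rw [show n+1+1 = n+2 by omega, this, Finset.sum_range_succ]
    have e3 : ∑ i ∈ Finset.range (n+1), n.choose (i/2)
        = ∑ i ∈ Finset.range n, n.choose (i/2) + n.choose (n/2) := Finset.sum_range_succ _ _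
    have hpow : 2^(n+1) = 2 * 2^n := by ring
    rw [e0, key]
    omega

lemma B_zero (n : ℕ) : B n 0 = 1 := by
  unfold B
  have h1 : ((n : ℤ) - 0).toNat = n := by omega
  rw [h1]
  have h2 : (∑ i ∈ Finset.range (n+1), (n.choose (i/2) : ℝ)) = (2:ℝ)^n := by
    rw [← Nat.cast_sum]
    rw [choose_half_total n]
    push_cast; ring
  rw [h2]
  rw [zpow_neg, zpow_natCast]
  field_simp

lemma B_top (n : ℕ) : B (n+1) (((n+1:ℕ)):ℤ) = 1/2 * B n n := by
  unfold B
  have h1 : (((n:ℤ)+1) - ((n:ℤ)+1)).toNat = 0 := by omega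
  have h2 : ((n:ℤ) - (n:ℤ)).toNat = 0 := by omega
  have h3 : (((n+1:ℕ):ℤ) - ((n:ℤ)+1)).toNat = 0 := by push_cast; omega
  push_cast
  rw [h1, h2]
  simp [Finset.sum_range_one]
  rw [zpow_add₀ (by norm_num : (2:ℝ) ≠ 0), zpow_neg, zpow_neg, zpow_one, zpow_natCast]

lemma B_step (n : ℕ) (k : ℤ) (hk : k ≤ (n:ℤ) - 1) :
    B (n+1) k = 1/2 * B n (k-1) + 1/2 * B n (k+1) := by
  unfold B
  set T : ℕ := ((n:ℤ) - (k+1)).toNat with hT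
  have e1 : (((n+1:ℕ):ℤ) - k).toNat = T + 2 := by push_cast; omega
  have e2 : ((n:ℤ) - (k-1)).toNat = T + 2 := by omega
  have e3 : ((n:ℤ) - (k+1)).toNat = T := by omega
  rw [e1, e2]
  have key : (∑ i ∈ Finset.range (T+2+1), ((n+1).choose (i/2) : ℝ))
      = ∑ i ∈ Finset.range (T+2+1), (n.choose (i/2) : ℝ)
        + ∑ i ∈ Finset.range (T+1), (n.choose (i/2) : ℝ) := by
    rw [← Nat.cast_sum, ← Nat.cast_sum, ← Nat.cast_sum, ← Nat.cast_add]
    exact_mod_cast congrArg Nat.cast (choose_half_shift n (T+1))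
  rw [key]
  have hp : (2:ℝ) ^ (-((n+1:ℕ):ℤ)) = 1/2 * (2:ℝ) ^ (-(n:ℤ)) := by
    push_cast
    rw [neg_add, zpow_add₀ (by norm_num : (2:ℝ) ≠ 0)]
    norm_num
    ring
  rw [hp]
  ring

lemma D_of_nonpos (n : ℕ) (x : ℝ) (hx : x ≤ 0) : D n x = 1 := by
  cases n <;> simp [D, hx]

lemma D_of_gt (n : ℕ) (x : ℝ) (hx : (n:ℝ) < x) : D n x = 0 := by
  cases n with
  | zero =>
    have : ¬ (x ≤ 0) := by push_cast at hx; linarith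
    simp [D, this]
  | succ n =>
    have h1 : ¬ (x ≤ 0) := by
      push_cast at hx
      have : (0:ℝ) ≤ n := Nat.cast_nonneg n
      linarith
    have h2 : ((n:ℝ) + 1) < x := by push_cast at hx; linarith
    simp only [D]
    rw [if_neg h1, if_pos h2]

lemma D_int : ∀ (n : ℕ) (k : ℤ), 0 ≤ k → k ≤ (n:ℤ) → Even (k + (n:ℤ)) → D n (k:ℝ) = B n k := by
  intro n
  induction n with
  | zero =>
    intro k h0 h1 _
    have hk : k = 0 := by omega
    subst hk
    rw [D_of_nonpos 0 _ (by norm_num)]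
    unfold B
    norm_num
  | succ n ih =>
    intro k h0 h1 hpar
    obtain ⟨t, ht⟩ := hpar
    rcases eq_or_lt_of_le h0 with h00 | hk1
    · -- k = 0
      have hk0 : k = 0 := h00.symm
      subst hk0
      rw [show ((0:ℤ):ℝ) = 0 by norm_num, D_of_nonpos (n+1) 0 le_rfl, B_zero]
    · -- 1 ≤ k
      have hx0 : ¬ ((k:ℝ) ≤ 0) := by
        push_cast
        intro h
        have : (0:ℝ) < k := by exact_mod_cast hk1
        linarith
      have hx1 : ¬ (((n:ℝ) + 1) < (k:ℝ)) := by
        intro h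
        have : ((n:ℤ) + 1 : ℝ) < (k:ℝ) := by push_cast at h ⊢; linarith
        have : (n:ℤ) + 1 < k := by exact_mod_cast this
        omega
      have hint : ∃ m : ℤ, (k:ℝ) = (m:ℝ) := ⟨k, rfl⟩
      simp only [D]
      rw [if_neg hx0, if_neg (by push_cast at hx1 ⊢; exact hx1), if_pos hint]
      have ek1 : (k:ℝ) - 1 = ((k-1 : ℤ) : ℝ) := by push_cast; ring
      have ek2 : (k:ℝ) + 1 = ((k+1 : ℤ) : ℝ) := by push_cast; ring
      rw [ek1, ek2]
      rw [ih (k-1) (by omega) (by omega) (by refine ⟨t - 1, by omega⟩)]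
      rcases (show k = (n:ℤ) + 1 ∨ k ≤ (n:ℤ) - 1 by omega) with hktop | hkmid
      · -- k = n+1
        rw [D_of_gt n _ (by push_cast [hktop]; linarith)]
        subst hktop
        have : (n:ℤ) + 1 - 1 = (n:ℤ) := by ring
        rw [this]
        have hcast : ((n:ℤ)+1) = ((n+1:ℕ):ℤ) := by push_cast; ring
        rw [hcast, B_top]
        ring
      · rw [ih (k+1) (by omega) (by omega) (by exact ⟨t, by push_cast at ht ⊢; omega⟩)]
        rw [B_step n k hkmid]

lemma sum_at_zero (N : ℕ) (m : ℤ) (H : ℕ) :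
    ∑ i ∈ Finset.range (H+1), ((0:ℝ)^i/(1+(0:ℝ))^(i+1)) * B (N - i - 1) (m + (i:ℤ))
      = B (N-1) m := by
  rw [Finset.sum_eq_single 0]
  · norm_num
  · intro i _ hne
    simp [zero_pow hne]
  · intro h
    exact absurd (Finset.mem_range.2 (by omega)) h

lemma D_formula : ∀ (n : ℕ) (m : ℤ) (α : ℝ), 0 ≤ m → m ≤ (n:ℤ) - 1 → 0 ≤ α → α < 1 →
    Odd (m + (n:ℤ)) →
    D n ((m:ℝ) + α) = ∑ i ∈ Finset.range ((((n:ℤ) - m - 1)/2).toNat + 1),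
      (α ^ i / (1 + α) ^ (i + 1)) * B (n - i - 1) (m + (i:ℤ)) := by
  intro n
  induction n with
  | zero =>
    intro m α hm0 hmn _ _ _
    exfalso
    norm_num at hmn
    omega
  | succ n ih =>
    intro m α hm0 hmn hα0 hα1 hodd
    obtain ⟨t, ht⟩ := hodd
    push_cast at ht hmn
    have hmn' : m ≤ (n:ℤ) := by omega
    have hpar2 : m + (n:ℤ) = 2*t := by omega
    rcases eq_or_lt_of_le hα0 with h0 | hαpos
    · -- α = 0
      have hα : α = 0 := h0.symm
      subst hα
      rw [sum_at_zero (n+1) m, add_zero, show (n+1-1 : ℕ) = n by omega]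
      rcases eq_or_lt_of_le hm0 with hm00 | hm1
      · -- m = 0
        have hm : m = 0 := hm00.symm
        subst hm
        rw [show ((0:ℤ):ℝ) = 0 by norm_num, D_of_nonpos _ _ le_rfl, B_zero]
      · -- 1 ≤ m
        have hx0 : ¬ ((m:ℝ) ≤ 0) := by
          intro h
          have : (m:ℤ) ≤ 0 := by exact_mod_cast h
          omega
        have hx1 : ¬ (((n:ℝ) + 1) < (m:ℝ)) := by
          intro h
          have : (n:ℤ) + 1 < m := by exact_mod_cast h
          omega
        simp only [D]
        rw [if_neg hx0, if_neg hx1, if_pos ⟨m, rfl⟩]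
        rw [show (m:ℝ) - 1 = ((m-1 : ℤ) : ℝ) by push_cast; ring,
            show (m:ℝ) + 1 = ((m+1 : ℤ) : ℝ) by push_cast; ring]
        have hD1 : D n (((m-1 : ℤ)):ℝ) = B (n-1) (m-1) := by
          have h := ih (m-1) 0 (by omega) (by omega) le_rfl one_pos ⟨t-1, by omega⟩
          rw [add_zero] at h
          rw [h, sum_at_zero]
        rcases (show m = (n:ℤ) ∨ m ≤ (n:ℤ) - 2 by omega) with hmtop | hmmid
        · -- m = n
          obtain ⟨n', rfl⟩ : ∃ n', n = n' + 1 := ⟨n-1, by omega⟩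
          have hD2 : D (n'+1) (((m+1 : ℤ)):ℝ) = 0 := by
            apply D_of_gt
            push_cast
            rw [hmtop]
            push_cast
            linarith
          rw [hD1, hD2, hmtop]
          rw [show ((n'+1:ℕ):ℤ) - 1 = (n':ℤ) by push_cast; ring,
              show (n'+1-1 : ℕ) = n' by omega,
              show ((n'+1:ℕ):ℤ) = ((n'+1:ℕ):ℤ) from rfl]
          rw [B_top]
          ring
        · -- m ≤ n - 2
          have hD2 : D n (((m+1 : ℤ)):ℝ) = B (n-1) (m+1) := by
            have h := ih (m+1) 0 (by omega) (by omega) le_rfl one_pos ⟨t, by omega⟩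
            rw [add_zero] at h
            rw [h, sum_at_zero]
          rw [hD1, hD2]
          obtain ⟨n', rfl⟩ : ∃ n', n = n' + 1 := ⟨n-1, by omega⟩
          rw [show (n'+1-1 : ℕ) = n' by omega]
          rw [B_step n' m (by push_cast at hmmid ⊢; omega)]
    · -- α > 0
      have hm0R : (0:ℝ) ≤ (m:ℝ) := by exact_mod_cast hm0
      have hmnR : (m:ℝ) ≤ (n:ℝ) := by exact_mod_cast hmn'
      have hx0 : ¬ ((m:ℝ) + α ≤ 0) := by intro h; linarith
      have hx1 : ¬ (((n:ℝ) + 1) < (m:ℝ) + α) := by intro h; linarith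
      have hint : ¬ ∃ j : ℤ, (m:ℝ) + α = (j:ℝ) := by
        rintro ⟨j, hj⟩
        have hα' : α = ((j - m : ℤ) : ℝ) := by push_cast; linarith
        have h1' : 0 < j - m := by exact_mod_cast (hα' ▸ hαpos)
        have h2' : j - m < 1 := by exact_mod_cast (hα' ▸ hα1)
        omega
      have hfloorα : ⌊α⌋ = 0 := Int.floor_eq_zero_iff.2 ⟨hα0, hα1⟩
      have hfloor : ⌊(m:ℝ) + α⌋ = m := by
        rw [add_comm, Int.floor_add_intCast, hfloorα, zero_add]
      have hfract : Int.fract ((m:ℝ) + α) = α := by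
        rw [Int.fract, hfloor]; ring
      have hlin : ¬ (Odd n ∧ (m:ℝ) + α < 1) := by
        rintro ⟨hoddn, hlt⟩
        have hm00 : m = 0 := by
          by_contra hcon
          have h1m : 1 ≤ m := by omega
          have : (1:ℝ) ≤ (m:ℝ) := by exact_mod_cast h1m
          linarith
        obtain ⟨s, hs⟩ := hoddn
        omega
      have heven : Even (⌊(m:ℝ) + α⌋ + (n:ℤ)) := by
        rw [hfloor]; exact ⟨t, by omega⟩
      simp only [D]
      rw [if_neg hx0, if_neg hx1, if_neg hint, if_neg hlin, if_pos heven]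
      rw [hfloor, hfract]
      rw [D_int n m hm0 hmn' ⟨t, by omega⟩]
      rcases (show m = (n:ℤ) ∨ m ≤ (n:ℤ) - 2 by omega) with hmtop | hmmid
      · -- m = n
        have hD2 : D n ((m:ℝ) + α + 1) = 0 := by
          apply D_of_gt
          have hmr : (m:ℝ) = (n:ℝ) := by exact_mod_cast hmtop
          linarith
        rw [hD2]
        have hH : ((((n+1:ℕ):ℤ) - m - 1)/2).toNat = 0 := by push_cast; omega
        rw [hH, Finset.sum_range_one]
        rw [show (n+1-0-1 : ℕ) = n by omega, show m + ((0:ℕ):ℤ) = m by push_cast; ring]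
        norm_num
      · -- m ≤ n - 2
        have hplus : (m:ℝ) + α + 1 = ((m+1:ℤ):ℝ) + α := by push_cast; ring
        rw [hplus]
        rw [ih (m+1) α (by omega) (by omega) hα0 hα1 ⟨t, by omega⟩]
        have h1α : (0:ℝ) < 1 + α := by linarith
        have h1α' : (1 + α) ≠ 0 := h1α.ne'
        have hidx : ((((n+1:ℕ):ℤ) - m - 1)/2).toNat
            = (((n:ℤ) - (m+1) - 1)/2).toNat + 1 := by push_cast; omega
        rw [hidx, Finset.sum_range_succ' _ ((((n:ℤ) - (m+1) - 1)/2).toNat + 1)]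
        rw [show (n+1-0-1 : ℕ) = n by omega, show m + ((0:ℕ):ℤ) = m by push_cast; ring]
        rw [Finset.mul_sum]
        have hterm : ∀ j ∈ Finset.range ((((n:ℤ) - (m+1) - 1)/2).toNat + 1),
            α / (1 + α) * (α ^ j / (1 + α) ^ (j + 1) * B (n - j - 1) (m + 1 + (j:ℤ)))
              = α ^ (j+1) / (1 + α) ^ ((j+1) + 1) * B (n + 1 - (j+1) - 1) (m + ((j+1:ℕ):ℤ)) := by
          intro j _
          rw [show (n+1-(j+1)-1 : ℕ) = n-j-1 by omega,
              show m + ((j+1:ℕ):ℤ) = m + 1 + (j:ℤ) by push_cast; ring,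
              pow_succ α j, pow_succ (1+α) (j+1)]
          field_simp
        rw [Finset.sum_congr rfl hterm]
        norm_num
        ring
/-- explicit formula for `D_n(m + α)` when `m + n` is odd. -/
theorem D_eq_sum_of_odd (n : ℕ) (m : ℤ) (α : ℝ)
    (hm0 : 0 ≤ m) (hmn : m ≤ (n : ℤ) - 1)
    (hα0 : 0 ≤ α) (hα1 : α < 1)
    (hodd : Odd (m + (n : ℤ))) :
    D n ((m : ℝ) + α) =
      ∑ i ∈ Finset.range ((((n : ℤ) - m - 1) / 2).toNat + 1),
        (α ^ i / (1 + α) ^ (i + 1)) * B (n - i - 1) (m + (i : ℤ)) := by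
  exact D_formula n m α hm0 hmn hα0 hα1 hodd
end

section
/- Let (Ω, 𝒜, μ) be a probability space, 𝒢 ⊆ 𝒜 a sub-σ-algebra, and X an integrable real-valued random variable with |X| ≤ 1 almost surely and E[X ∣ 𝒢] ≤ 0 almost surely. Define Y = (X − 1) · E[X ∣ 𝒢] / (1 − E[X ∣ 𝒢]). Then almost surely: Y ≥ 0, |X + Y| ≤ 1, and E[X + Y ∣ 𝒢] = 0. -/
open MeasureTheory

/-! Write `Z = E[X ∣ 𝒢]` and `g = Z / (1 - Z)`, so that `Y = (X - 1) g`. Since `Z ≤ 0`, the factor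
`g` is `𝒢`-measurable with `|g| ≤ 1`, so it pulls out of the conditional expectation:
`E[X + Y ∣ 𝒢] = Z + (Z - 1) g = 0`. Pointwise, `X + Y = (X - Z) / (1 - Z)`, which lies in `[-1, 1]`
because `-1 ≤ X ≤ 1` and `Z ≤ 0`. -/

lemma compensator_nonneg {x z : ℝ} (hx : x ≤ 1) (hz : z ≤ 0) : 0 ≤ (x - 1) * z / (1 - z) :=
  div_nonneg (mul_nonneg_of_nonpos_of_nonpos (by linarith) hz) (by linarith)

lemma add_compensator_eq (x : ℝ) {z : ℝ} (hz : z ≠ 1) :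
    x + (x - 1) * z / (1 - z) = (x - z) / (1 - z) := by
  field_simp [sub_ne_zero.mpr hz.symm]
  ring

lemma abs_add_compensator_le_one {x z : ℝ} (hx : |x| ≤ 1) (hz : z ≤ 0) :
    |x + (x - 1) * z / (1 - z)| ≤ 1 := by
  have hpos : 0 < 1 - z := by linarith
  rw [add_compensator_eq x (by linarith), abs_div, abs_of_pos hpos, div_le_one hpos, abs_le]
  obtain ⟨hx₁, hx₂⟩ := abs_le.mp hx
  constructor <;> linarith

lemma abs_div_one_sub_le_one {z : ℝ} (hz : z ≤ 0) : |z / (1 - z)| ≤ 1 := by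
  have hpos : 0 < 1 - z := by linarith
  rw [abs_div, abs_of_pos hpos, div_le_one hpos, abs_of_nonpos hz]
  linarith

theorem condExp_add_sub_const_mul_of_bound {Ω : Type*} {m mΩ : MeasurableSpace Ω} {μ : Measure Ω}
    [IsFiniteMeasure μ] (hm : m ≤ mΩ) {X g : Ω → ℝ} (hX : Integrable X μ)
    (hg : StronglyMeasurable[m] g) (c C : ℝ) (hg_bound : ∀ᵐ ω ∂μ, ‖g ω‖ ≤ C) :
    μ[fun ω => X ω + (X ω - c) * g ω | m] =ᵐ[μ] fun ω => μ[X|m] ω + (μ[X|m] ω - c) * g ω := by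
  have hXc : Integrable (fun ω => X ω - c) μ := hX.sub (integrable_const c)
  have hcondExp_sub : μ[fun ω => X ω - c | m] =ᵐ[μ] fun ω => μ[X|m] ω - c := by
    filter_upwards [condExp_sub hX (integrable_const c) m] with ω hω
    exact hω.trans (by rw [Pi.sub_apply, condExp_const hm])
  have hpull : μ[fun ω => g ω * (X ω - c) | m] =ᵐ[μ] fun ω => g ω * (μ[X|m] ω - c) := by
    filter_upwards [condExp_stronglyMeasurable_mul_of_bound hm hg hXc C hg_bound,
      hcondExp_sub] with ω hω hω'
    exact hω.trans (by rw [Pi.mul_apply, hω'])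
  simp_rw [mul_comm _ (g _)]
  filter_upwards [condExp_add hX (hXc.bdd_mul (hg.mono hm).aestronglyMeasurable hg_bound) m,
    hpull] with ω hω hω'
  exact hω.trans (by rw [Pi.add_apply, hω'])

/-- converting a supermartingale increment into a martingale increment.
If `|X| ≤ 1` a.s. and `E[X ∣ 𝒢] ≤ 0` a.s., then the compensator
`Y = (X − 1)·E[X ∣ 𝒢]/(1 − E[X ∣ 𝒢])` satisfies a.s.: `Y ≥ 0`, `|X + Y| ≤ 1`, and
`E[X + Y ∣ 𝒢] = 0`. -/
theorem compensator_of_supermartingale_step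
    {Ω : Type*} {mΩ : MeasurableSpace Ω} (μ : Measure Ω) [IsProbabilityMeasure μ]
    (𝒢 : MeasurableSpace Ω) (h𝒢 : 𝒢 ≤ mΩ)
    (X : Ω → ℝ) (hX : Integrable X μ)
    (hbd : ∀ᵐ ω ∂μ, |X ω| ≤ 1)
    (hle : ∀ᵐ ω ∂μ, (μ[X|𝒢]) ω ≤ 0) :
    (∀ᵐ ω ∂μ, 0 ≤ (X ω - 1) * (μ[X|𝒢]) ω / (1 - (μ[X|𝒢]) ω)) ∧
    (∀ᵐ ω ∂μ, |X ω + (X ω - 1) * (μ[X|𝒢]) ω / (1 - (μ[X|𝒢]) ω)| ≤ 1) ∧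
    (∀ᵐ ω ∂μ,
      (μ[fun ω' => X ω' + (X ω' - 1) * (μ[X|𝒢]) ω' / (1 - (μ[X|𝒢]) ω')|𝒢]) ω = 0) := by
  set Z := μ[X|𝒢]
  have hg : StronglyMeasurable[𝒢] fun ω => Z ω / (1 - Z ω) :=
    stronglyMeasurable_condExp.div (stronglyMeasurable_const.sub stronglyMeasurable_condExp)
  have hg_bound : ∀ᵐ ω ∂μ, ‖Z ω / (1 - Z ω)‖ ≤ 1 := by
    filter_upwards [hle] with ω hz using abs_div_one_sub_le_one hz
  refine ⟨?_, ?_, ?_⟩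
  · filter_upwards [hbd, hle] with ω hx hz using compensator_nonneg (abs_le.mp hx).2 hz
  · filter_upwards [hbd, hle] with ω hx hz using abs_add_compensator_le_one hx hz
  · simp_rw [mul_div_assoc]
    filter_upwards [condExp_add_sub_const_mul_of_bound h𝒢 hX hg 1 1 hg_bound, hle] with ω hω hz
    rw [hω, ← mul_div_assoc, add_compensator_eq _ (by linarith), sub_self, zero_div]
end

section
/- Let (Ω, 𝒜, μ) be a probability space, n ∈ ℕ, and x ∈ ℝ. Then the supremum, over all filtrations (ℱ_k) on Ω and all real-valued martingales (M_k) with respect to (ℱ_k) and μ with M_0 = 0 almost surely and |M_{k+1} − M_k| ≤ 1 almost surely for all k, of μ{ω : ∃ k with 0 ≤ k ≤ n and M_k(ω) ≥ x} is equal to the supremum over the same class of μ{ω : M_n(ω) ≥ x}. -/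
/-!
Stopping a martingale at the first time `k ≤ n` at which it enters `[x, ∞)` yields again a
martingale starting at `0` with increments bounded by `1`, and the stopped process lies in
`[x, ∞)` at time `n` exactly when the original one visits `[x, ∞)` up to time `n`. Hence every
maximal probability is a tail probability; the converse inequality is trivial.
-/

open MeasureTheory

section

variable {Ω : Type*} {mΩ : MeasurableSpace Ω}

protected theorem MeasureTheory.Martingale.stoppedProcess {μ : Measure Ω}
    {𝒢 : Filtration ℕ mΩ} [SigmaFiniteFiltration μ 𝒢] {f : ℕ → Ω → ℝ} {τ : Ω → ℕ∞}
    (h : Martingale f 𝒢 μ) (hτ : IsStoppingTime 𝒢 τ) :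
    Martingale (stoppedProcess f τ) 𝒢 μ := by
  refine martingale_iff.2 ⟨?_, h.submartingale.stoppedProcess hτ⟩
  have hneg : stoppedProcess (-f) τ = -(stoppedProcess f τ) := rfl
  simpa [hneg] using (h.neg.submartingale.stoppedProcess hτ).neg

theorem abs_stoppedProcess_succ_sub_le {f : ℕ → Ω → ℝ} (τ : Ω → WithTop ℕ) {k : ℕ} {ω : Ω} {C : ℝ}
    (h : |f (k + 1) ω - f k ω| ≤ C) :
    |(stoppedProcess f τ (k + 1) ω - stoppedProcess f τ k ω)| ≤ C := by
  rcases le_or_gt (τ ω) k with hτk | hkτ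
  · have hτk' : τ ω ≤ (k + 1 : ℕ) := hτk.trans (WithTop.coe_le_coe.2 k.le_succ)
    rw [stoppedProcess_eq_of_ge (i := k + 1) hτk', stoppedProcess_eq_of_ge (i := k) hτk, sub_self,
      abs_zero]
    exact (abs_nonneg _).trans h
  · have hkτ' : ((k + 1 : ℕ) : WithTop ℕ) ≤ τ ω := ENat.natCast_add_one_le_iff.2 hkτ
    rwa [stoppedProcess_eq_of_le (i := k + 1) hkτ', stoppedProcess_eq_of_le (i := k) hkτ.le]

theorem stoppedProcess_hittingBtwn_mem {ι β : Type*} [ConditionallyCompleteLinearOrder ι]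
    [WellFoundedLT ι] {u : ι → Ω → β} {s : Set β} {n m : ι} {ω : Ω}
    (h : ∃ j ∈ Set.Icc n m, u j ω ∈ s) :
    stoppedProcess u (fun ω ↦ ((hittingBtwn u s n m ω : ι) : WithTop ι)) m ω ∈ s := by
  have hle : ((hittingBtwn u s n m ω : ι) : WithTop ι) ≤ m :=
    WithTop.coe_le_coe.2 (hittingBtwn_le ω)
  rw [stoppedProcess_eq_of_ge (τ := fun ω ↦ ((hittingBtwn u s n m ω : ι) : WithTop ι)) hle]
  simpa using hittingBtwn_mem_set h

end

/-- on a fixed probability space, the supremum over all bounded-difference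
martingales starting at `0` of the probability of visiting `[x, ∞)` within `n` steps
equals the supremum over the same class of the tail probability `μ{M_n ≥ x}`. -/
theorem iSup_max_eq_iSup_tail_martingale
    {Ω : Type*} {mΩ : MeasurableSpace Ω} (μ : Measure Ω) [IsProbabilityMeasure μ]
    (n : ℕ) (x : ℝ) :
    (⨆ p : {p : Filtration ℕ mΩ × (ℕ → Ω → ℝ) //
        Martingale p.2 p.1 μ ∧ (∀ᵐ ω ∂μ, p.2 0 ω = 0) ∧
        ∀ k : ℕ, ∀ᵐ ω ∂μ, |p.2 (k + 1) ω - p.2 k ω| ≤ 1},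
      μ {ω | ∃ k ≤ n, x ≤ p.val.2 k ω}) =
    (⨆ p : {p : Filtration ℕ mΩ × (ℕ → Ω → ℝ) //
        Martingale p.2 p.1 μ ∧ (∀ᵐ ω ∂μ, p.2 0 ω = 0) ∧
        ∀ k : ℕ, ∀ᵐ ω ∂μ, |p.2 (k + 1) ω - p.2 k ω| ≤ 1},
      μ {ω | x ≤ p.val.2 n ω}) := by
  refine le_antisymm (iSup_le fun ⟨⟨ℱ, M⟩, hM, hM0, hMdiff⟩ => ?_)
    (iSup_mono fun p => measure_mono fun ω hω => ⟨n, le_rfl, hω⟩)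
  let τ : Ω → WithTop ℕ := fun ω => (hittingBtwn M (Set.Ici x) 0 n ω : ℕ)
  have hτ : IsStoppingTime ℱ τ :=
    hM.stronglyAdapted.adapted.isStoppingTime_hittingBtwn measurableSet_Ici
  have hN0 : ∀ᵐ ω ∂μ, stoppedProcess M τ 0 ω = 0 := by
    filter_upwards [hM0] with ω h
    rwa [stoppedProcess_eq_of_le (i := 0) (τ := τ) bot_le]
  have hNdiff (k : ℕ) : ∀ᵐ ω ∂μ, |(stoppedProcess M τ (k + 1) ω - stoppedProcess M τ k ω)| ≤ 1 :=
    (hMdiff k).mono fun ω => abs_stoppedProcess_succ_sub_le τ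
  refine le_iSup_of_le ⟨⟨ℱ, stoppedProcess M τ⟩, hM.stoppedProcess hτ, hN0, hNdiff⟩
    (measure_mono fun ω ⟨k, hk, hx⟩ => ?_)
  exact stoppedProcess_hittingBtwn_mem ⟨k, ⟨k.zero_le, hk⟩, hx⟩
end

section
/- Let f : ℝ → ℝ be continuous on [0,2], nonincreasing on [0,2], convex on [0,2], continuously differentiable on (0,2), and twice differentiable on (0,1) and on (1,2). Define F : (0,2) → ℝ by F(x) = (1/(x+1))·f(0) + (x/(x+1))·f(x+1) for x ∈ (0,1], and F(x) = ((2−x)/(3−x))·f(x−1) + (1/(3−x))·f(2) for x ∈ (1,2). Then F is convex on the interval (0,1) and convex on the interval (1,2). -/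
/-! On each branch, `F x` is the value at `x` of the chord of `f` over `[0, x + 1]`, resp.
`[x - 1, 2]`, and the reflection `y ↦ 2 - y` turns the second branch into the first.
For the first, let `ℓ y = f (p + 1) + m (y - p - 1)` support `f` at `p + 1`. Putting
`ℓ (x + 1)` in place of `f (x + 1)` gives `ℓ 0 + m x + (f 0 - ℓ 0) / (x + 1)`, which is convex
because `ℓ 0 ≤ f 0`, lies below `F` because the weight `x / (x + 1)` is nonnegative, and touches
`F` at `p`. A function touched from below at every point by a convex minorant is convex. -/

open Set

theorem convexOn_of_forall_exists_minorant {𝕜 E β : Type*} [Semiring 𝕜] [PartialOrder 𝕜]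
    [AddCommMonoid E] [SMul 𝕜 E] [AddCommMonoid β] [PartialOrder β] [IsOrderedAddMonoid β]
    [Module 𝕜 β] [PosSMulMono 𝕜 β] {s : Set E} {F : E → β} (hs : Convex 𝕜 s)
    (h : ∀ p ∈ s, ∃ g : E → β, ConvexOn 𝕜 s g ∧ (∀ x ∈ s, g x ≤ F x) ∧ g p = F p) :
    ConvexOn 𝕜 s F := by
  refine ⟨hs, fun x hx y hy a b ha hb hab => ?_⟩
  obtain ⟨g, hg, hgF, hgp⟩ := h _ (hs hx hy ha hb hab)
  calc F (a • x + b • y) = g (a • x + b • y) := hgp.symm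
    _ ≤ a • g x + b • g y := hg.2 hx hy ha hb hab
    _ ≤ a • F x + b • F y := by gcongr <;> exact hgF _ ‹_›

theorem ConvexOn.comp_const_sub {𝕜 E β : Type*} [Ring 𝕜] [PartialOrder 𝕜] [AddCommGroup E]
    [Module 𝕜 E] [AddCommMonoid β] [PartialOrder β] [SMul 𝕜 β] {s : Set E} {f : E → β}
    (hf : ConvexOn 𝕜 s f) (c : E) : ConvexOn 𝕜 ((c - ·) ⁻¹' s) fun x => f (c - x) := by
  have hcombo : ∀ x y : E, ∀ a b : 𝕜, a + b = 1 →
      c - (a • x + b • y) = a • (c - x) + b • (c - y) := fun x y a b hab => by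
    conv_lhs => rw [← Convex.combo_self hab c]
    rw [smul_sub, smul_sub]; abel
  refine ⟨fun x hx y hy a b ha hb hab => ?_, fun x hx y hy a b ha hb hab => ?_⟩
  · simpa only [mem_preimage, hcombo x y a b hab] using hf.1 hx hy ha hb hab
  · simpa only [hcombo x y a b hab] using hf.2 hx hy ha hb hab

theorem ConvexOn.exists_add_mul_sub_le_of_mem_interior {S : Set ℝ} {f : ℝ → ℝ} {p : ℝ}
    (hf : ConvexOn ℝ S f) (hp : p ∈ interior S) :
    ∃ m : ℝ, ∀ y ∈ S, f p + m * (y - p) ≤ f y := by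
  refine ⟨derivWithin f (Ioi p) p, fun y hy => ?_⟩
  rcases lt_trichotomy y p with hyp | rfl | hpy
  · have := (hf.slope_le_leftDeriv_of_mem_interior hy hp hyp).trans
      (hf.leftDeriv_le_rightDeriv_of_mem_interior hp)
    rw [slope_def_field, div_le_iff₀ (sub_pos.2 hyp)] at this
    linarith
  · simp
  · have := hf.rightDeriv_le_slope_of_mem_interior hp hy hpy
    rw [slope_def_field, le_div_iff₀ (sub_pos.2 hpy)] at this
    linarith

theorem convexOn_add_mul_add_div_add_one {A B C : ℝ} (hC : 0 ≤ C) :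
    ConvexOn ℝ (Ioi (-1)) fun x => A + B * x + C / (x + 1) := by
  have hinv : ConvexOn ℝ (Ioi (-1)) fun x : ℝ => C • (x + 1) ^ (-1 : ℤ) := by
    have := (convexOn_zpow (𝕜 := ℝ) (-1)).translate_left 1
    rw [show (fun z : ℝ => 1 + z) ⁻¹' Ioi 0 = Ioi (-1) by ext; simp [neg_lt_iff_pos_add']] at this
    exact this.smul hC
  have haff : ConvexOn ℝ (Ioi (-1)) fun x : ℝ => A + B * x :=
    ⟨convex_Ioi _, fun x _ y _ a b _ _ hab => le_of_eq (by
      simp only [smul_eq_mul]; linear_combination -A * hab)⟩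
  exact (haff.add hinv).congr fun x _ => by simp [div_eq_mul_inv]

theorem ConvexOn.convexOn_secant_zero_add_one {f : ℝ → ℝ} {b : ℝ} (hf : ConvexOn ℝ (Icc 0 b) f) :
    ConvexOn ℝ (Ico 0 (b - 1)) fun x => (1 / (x + 1)) * f 0 + (x / (x + 1)) * f (x + 1) := by
  refine convexOn_of_forall_exists_minorant (convex_Ico 0 (b - 1)) fun p hp => ?_
  obtain ⟨m, hm⟩ := hf.exists_add_mul_sub_le_of_mem_interior (p := p + 1)
    (by rw [interior_Icc]; constructor <;> linarith [hp.1, hp.2])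
  set ℓ : ℝ → ℝ := fun y => f (p + 1) + m * (y - (p + 1)) with hℓ
  have hℓ0 : ℓ 0 ≤ f 0 := hm 0 ⟨le_rfl, by linarith [hp.1, hp.2]⟩
  refine ⟨fun x => ℓ 0 + m * x + (f 0 - ℓ 0) / (x + 1), ?_, fun x hx => ?_, ?_⟩
  · exact (convexOn_add_mul_add_div_add_one (sub_nonneg.2 hℓ0)).subset
      (fun x hx => show -1 < x by linarith [hx.1]) (convex_Ico 0 (b - 1))
  · have hx1 : 0 < x + 1 := by linarith [hx.1]
    calc ℓ 0 + m * x + (f 0 - ℓ 0) / (x + 1)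
        = (1 / (x + 1)) * f 0 + (x / (x + 1)) * ℓ (x + 1) := by
          simp only [hℓ]; field_simp; ring
      _ ≤ (1 / (x + 1)) * f 0 + (x / (x + 1)) * f (x + 1) := by
          gcongr
          · exact div_nonneg hx.1 hx1.le
          · exact hm _ ⟨hx1.le, by linarith [hx.2]⟩
  · have hp1 : p + 1 ≠ 0 := by linarith [hp.1]
    simp only [hℓ]; field_simp; ring

theorem convexOn_of_convex_interpolation_general (f : ℝ → ℝ)
    (hconv : ConvexOn ℝ (Set.Icc 0 2) f) :
    ConvexOn ℝ (Set.Ioo (0 : ℝ) 1)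
      (fun x =>
        if x ≤ 1 then (1 / (x + 1)) * f 0 + (x / (x + 1)) * f (x + 1)
        else ((2 - x) / (3 - x)) * f (x - 1) + (1 / (3 - x)) * f 2) ∧
    ConvexOn ℝ (Set.Ioo (1 : ℝ) 2)
      (fun x =>
        if x ≤ 1 then (1 / (x + 1)) * f 0 + (x / (x + 1)) * f (x + 1)
        else ((2 - x) / (3 - x)) * f (x - 1) + (1 / (3 - x)) * f 2) := by
  have hsecant {g : ℝ → ℝ} (hg : ConvexOn ℝ (Icc 0 2) g) :
      ConvexOn ℝ (Ioo 0 1) fun x => (1 / (x + 1)) * g 0 + (x / (x + 1)) * g (x + 1) :=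
    hg.convexOn_secant_zero_add_one.subset (by norm_num [Ioo_subset_Ico_self]) (convex_Ioo 0 1)
  have hreflect : ConvexOn ℝ (Icc 0 2) fun y => f (2 - y) := by
    simpa using hconv.comp_const_sub 2
  constructor
  · exact (hsecant hconv).congr fun x hx => by simp [hx.2.le]
  · have := (hsecant hreflect).comp_const_sub 2
    rw [preimage_const_sub_Ioo, sub_zero, show (2 : ℝ) - 1 = 1 by norm_num] at this
    refine this.congr fun x hx => ?_
    simp only [if_neg (not_le.2 hx.1)]
    rw [show 2 - x + 1 = 3 - x by ring, show 2 - (3 - x) = x - 1 by ring]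
    ring

/-- Lemma on convexity: if `f` is continuous, nonincreasing and convex on
`[0,2]`, continuously differentiable on `(0,2)`, and twice differentiable on `(0,1)` and
on `(1,2)`, then the function
`F(x) = (1/(x+1))·f(0) + (x/(x+1))·f(x+1)` for `x ∈ (0,1]` and
`F(x) = ((2−x)/(3−x))·f(x−1) + (1/(3−x))·f(2)` for `x ∈ (1,2)`
is convex on `(0,1)` and on `(1,2)`. -/
theorem convexOn_of_convex_interpolation (f : ℝ → ℝ)
    (hcont : ContinuousOn f (Set.Icc 0 2))
    (hmono : AntitoneOn f (Set.Icc 0 2))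
    (hconv : ConvexOn ℝ (Set.Icc 0 2) f)
    (hC1 : ContDiffOn ℝ 1 f (Set.Ioo 0 2))
    (h2a : ∀ x ∈ Set.Ioo (0 : ℝ) 1, DifferentiableAt ℝ (deriv f) x)
    (h2b : ∀ x ∈ Set.Ioo (1 : ℝ) 2, DifferentiableAt ℝ (deriv f) x) :
    ConvexOn ℝ (Set.Ioo (0 : ℝ) 1)
      (fun x =>
        if x ≤ 1 then (1 / (x + 1)) * f 0 + (x / (x + 1)) * f (x + 1)
        else ((2 - x) / (3 - x)) * f (x - 1) + (1 / (3 - x)) * f 2) ∧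
    ConvexOn ℝ (Set.Ioo (1 : ℝ) 2)
      (fun x =>
        if x ≤ 1 then (1 / (x + 1)) * f 0 + (x / (x + 1)) * f (x + 1)
        else ((2 - x) / (3 - x)) * f (x - 1) + (1 / (3 - x)) * f 2) :=
  convexOn_of_convex_interpolation_general f hconv
end
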